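/- arXiv:1512.08379 — 6 statements merged into one kernel-verified Lean document; each statement's English description precedes it below -/
import Mathlib

section
/- Let X_1, …, X_m be independent, identically distributed real-valued random variables on a probability space, and let i be a positive integer with E[|X_1|^i] < ∞. Write a_k = E[X_1^k] for 0 ≤ k ≤ i. Then E[(X_1 + ⋯ + X_m)^i] = ∑_{λ ⊢ i} (m)_{ν_λ} d_λ a_λ, where the sum ranges over all partitions λ of the integer i. -/
open MeasureTheory ProbabilityTheory Finset

/-- `dcoef λ = i! / ((1!)^{r_1}(2!)^{r_2}⋯ r_1! r_2! ⋯)`, the number of set partitions of an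
`i`-element set whose block sizes are the parts of the integer partition `λ`. -/
noncomputable def dcoef {i : ℕ} (lam : Nat.Partition i) : ℝ :=
  (Nat.factorial i : ℝ) /
    ((lam.parts.map fun p => (Nat.factorial p : ℝ)).prod *
     ∏ j ∈ lam.parts.toFinset, (Nat.factorial (lam.parts.count j) : ℝ))

/-!
By the multinomial theorem, `E[(∑ⱼ Xⱼ)^i] = ∑ₖ multinomial(k) ∏ⱼ E[Xⱼ^{kⱼ}]`, the sum running
over `k : Fin m → ℕ` with `∑ k = i`; by independence and identical distribution each summand is
`multinomial(k) ∏ⱼ a_{kⱼ}`. Group the `k` by the partition `λ` of `i` formed by their nonzero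
values. Since `0! = a₀ = 1`, every `k` in the group of `λ` contributes `i! / ∏_{p ∈ λ} p! · a_λ`,
and the group has `(m)_{ν_λ} / (r₁! r₂! ⋯)` members: the parts of `λ` are placed injectively on
`ν_λ` of the `m` coordinates, and permuting equal parts gives the same `k`.
-/
section NonzeroValues

variable {ι : Type*} [Fintype ι]

def nonzeroValues (k : ι → ℕ) : Multiset ℕ :=
  (univ.val.map k).filter (· ≠ 0)

lemma sum_nonzeroValues (k : ι → ℕ) : (nonzeroValues k).sum = ∑ j, k j :=
  (Nat.Partition.ofSums _ (univ.val.map k) rfl).parts_sum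

lemma prod_map_nonzeroValues {M : Type*} [CommMonoid M] (k : ι → ℕ) {g : ℕ → M}
    (hg : g 0 = 1) : ((nonzeroValues k).map g).prod = ∏ j, g (k j) := by
  classical
  rw [nonzeroValues, Multiset.filter_map, Multiset.map_map, ← Finset.filter_val,
    ← Finset.prod_eq_multiset_prod]
  exact prod_filter_of_ne fun j _ hj h => hj (by rw [Function.comp_apply, h, hg])

lemma nonzeroValues_cons {m : ℕ} (v : ℕ) (k : Fin m → ℕ) :
    nonzeroValues (Fin.cons v k : Fin (m + 1) → ℕ) =
      if v = 0 then nonzeroValues k else v ::ₘ nonzeroValues k := by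
  rw [nonzeroValues, Fin.univ_succ, cons_val, Multiset.map_cons, Multiset.filter_cons,
    map_val, Multiset.map_map, Fin.cons_zero]
  by_cases hv : v = 0
  · simp only [hv, ne_eq, not_true_eq_false, if_false, if_true, zero_add]; rfl
  · simp only [hv, ne_eq, not_false_eq_true, if_true, if_false, Multiset.singleton_add]; rfl

lemma nonzeroValues_cons_eq_iff {m : ℕ} {P : Multiset ℕ} (hP : 0 ∉ P) {v : ℕ}
    (hv : v = 0 ∨ v ∈ P) (k : Fin m → ℕ) :
    nonzeroValues (Fin.cons v k : Fin (m + 1) → ℕ) = P ↔ nonzeroValues k = P.erase v := by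
  rw [nonzeroValues_cons]
  rcases hv with rfl | hvP
  · rw [if_pos rfl, Multiset.erase_of_notMem hP]
  · rw [if_neg (ne_of_mem_of_not_mem hvP hP)]
    constructor
    · rintro rfl; exact (Multiset.erase_cons_head v _).symm
    · rintro h; rw [h, Multiset.cons_erase hvP]

end NonzeroValues

def multiplicityFactorial (P : Multiset ℕ) : ℕ :=
  ∏ u ∈ P.toFinset, (P.count u).factorial

lemma multiplicityFactorial_eq_prod_of_subset {P : Multiset ℕ} {s : Finset ℕ}
    (h : P.toFinset ⊆ s) : multiplicityFactorial P = ∏ u ∈ s, (P.count u).factorial :=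
  prod_subset h fun u _ hu => by
    rw [Multiset.count_eq_zero.2 (by simpa using hu), Nat.factorial_zero]

lemma multiplicityFactorial_cons (v : ℕ) (Q : Multiset ℕ) :
    multiplicityFactorial (v ::ₘ Q) = (Q.count v + 1) * multiplicityFactorial Q := by
  have hs : Q.toFinset ⊆ insert v Q.toFinset := subset_insert _ _
  rw [multiplicityFactorial_eq_prod_of_subset (Multiset.toFinset_cons v Q).le,
    multiplicityFactorial_eq_prod_of_subset hs, ← mul_prod_erase _ _ (mem_insert_self _ _),
    ← mul_prod_erase _ _ (mem_insert_self _ _), Multiset.count_cons_self, Nat.factorial_succ,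
    mul_assoc]
  congr 2
  exact prod_congr rfl fun u hu => by rw [Multiset.count_cons_of_ne (ne_of_mem_erase hu)]

lemma count_mul_multiplicityFactorial_erase {P : Multiset ℕ} {v : ℕ} (hv : v ∈ P) :
    P.count v * multiplicityFactorial (P.erase v) = multiplicityFactorial P := by
  conv_rhs => rw [← Multiset.cons_erase hv, multiplicityFactorial_cons]
  rw [Multiset.count_erase_self, Nat.sub_add_cancel (Multiset.count_pos.2 hv)]

lemma Nat.succ_descFactorial_eq_add (m c : ℕ) :
    (m + 1).descFactorial c = m.descFactorial c + c * m.descFactorial (c - 1) := by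
  cases c with
  | zero => simp
  | succ c =>
    rw [Nat.add_sub_cancel, Nat.succ_descFactorial_succ, Nat.descFactorial_succ, ← add_mul]
    rcases le_or_gt c m with h | h
    · congr 1; omega
    · simp [Nat.descFactorial_eq_zero_iff_lt.2 h]

def withNonzeroValues (m : ℕ) (P : Multiset ℕ) : Finset (Fin m → ℕ) :=
  {k ∈ piAntidiag univ P.sum | nonzeroValues k = P}

section WithNonzeroValues

variable {m : ℕ} {P : Multiset ℕ}

lemma mem_withNonzeroValues {k : Fin m → ℕ} :
    k ∈ withNonzeroValues m P ↔ nonzeroValues k = P := by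
  rw [withNonzeroValues, mem_filter, mem_piAntidiag, and_iff_right_iff_imp]
  rintro rfl
  exact ⟨(sum_nonzeroValues k).symm, fun j _ => mem_univ j⟩

lemma card_withNonzeroValues_zero_mul_multiplicityFactorial (P : Multiset ℕ) :
    #(withNonzeroValues 0 P) * multiplicityFactorial P = (0).descFactorial (Multiset.card P) := by
  have h_empty (k : Fin 0 → ℕ) : nonzeroValues k = 0 := rfl
  rcases eq_or_ne P 0 with rfl | hP
  · have : withNonzeroValues 0 0 = {0} :=
      eq_singleton_iff_unique_mem.2
        ⟨mem_withNonzeroValues.2 (h_empty 0), fun k _ => Subsingleton.elim k 0⟩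
    simp [this, multiplicityFactorial]
  · have : withNonzeroValues 0 P = ∅ :=
      eq_empty_of_forall_notMem fun k hk => hP ((mem_withNonzeroValues.1 hk).symm.trans (h_empty k))
    rw [this, Nat.descFactorial_eq_zero_iff_lt.2 (Multiset.card_pos.2 hP), card_empty, zero_mul]

lemma card_filter_withNonzeroValues_apply_zero (hP : 0 ∉ P) {v : ℕ} (hv : v = 0 ∨ v ∈ P) :
    #{k ∈ withNonzeroValues (m + 1) P | k 0 = v} = #(withNonzeroValues m (P.erase v)) := by
  refine card_nbij' Fin.tail (fun k => Fin.cons v k) ?_ ?_ ?_ ?_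
  · intro k hk
    simp only [mem_coe, mem_filter, mem_withNonzeroValues] at hk
    obtain ⟨hk, rfl⟩ := hk
    rw [← Fin.cons_self_tail k, nonzeroValues_cons_eq_iff hP hv] at hk
    exact mem_withNonzeroValues.2 hk
  · intro k hk
    simp only [mem_coe, mem_filter, mem_withNonzeroValues, Fin.cons_zero, and_true]
    exact (nonzeroValues_cons_eq_iff hP hv k).2 (mem_withNonzeroValues.1 hk)
  · intro k hk
    simp only [mem_coe, mem_filter] at hk
    rw [← hk.2]
    exact Fin.cons_self_tail k
  · intro k _
    exact Fin.tail_cons _ _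

end WithNonzeroValues

theorem card_withNonzeroValues_mul_multiplicityFactorial (m : ℕ) {P : Multiset ℕ} (hP : 0 ∉ P) :
    #(withNonzeroValues m P) * multiplicityFactorial P = m.descFactorial (Multiset.card P) := by
  induction m generalizing P with
  | zero => exact card_withNonzeroValues_zero_mul_multiplicityFactorial P
  | succ m ih =>
    -- `k 0` is `0` or a part `v` of `P`, and `Fin.tail k` then has nonzero values `P.erase v`.
    have h_head : ∀ k ∈ withNonzeroValues (m + 1) P, k 0 ∈ insert 0 P.toFinset := by
      intro k hk
      rcases eq_or_ne (k 0) 0 with h | h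
      · simp [h]
      · refine mem_insert_of_mem (Multiset.mem_toFinset.2 ?_)
        rw [← mem_withNonzeroValues.1 hk, ← Fin.cons_self_tail k, nonzeroValues_cons, if_neg h]
        exact Multiset.mem_cons_self _ _
    have h_erase : ∀ v ∈ P.toFinset, #{k ∈ withNonzeroValues (m + 1) P | k 0 = v} *
        multiplicityFactorial P = P.count v * m.descFactorial (Multiset.card P - 1) := by
      intro v hv
      rw [Multiset.mem_toFinset] at hv
      rw [card_filter_withNonzeroValues_apply_zero hP (Or.inr hv),
        ← count_mul_multiplicityFactorial_erase hv, mul_left_comm,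
        ih fun h => hP (Multiset.mem_of_mem_erase h), Multiset.card_erase_of_mem hv,
        Nat.pred_eq_sub_one]
    rw [card_eq_sum_card_fiberwise h_head, sum_insert (by simpa using hP), add_mul, sum_mul,
      card_filter_withNonzeroValues_apply_zero hP (Or.inl rfl), Multiset.erase_of_notMem hP,
      ih hP, sum_congr rfl h_erase, ← sum_mul, Multiset.toFinset_sum_count_eq,
      Nat.succ_descFactorial_eq_add]

lemma multinomial_mul_prod_factorial_of_mem_withNonzeroValues {m : ℕ} {P : Multiset ℕ}
    {k : Fin m → ℕ} (hk : k ∈ withNonzeroValues m P) :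
    Nat.multinomial univ k * (P.map Nat.factorial).prod = P.sum.factorial := by
  rw [← mem_withNonzeroValues.1 hk, prod_map_nonzeroValues k Nat.factorial_zero,
    sum_nonzeroValues, mul_comm]
  exact Nat.multinomial_spec _ _

lemma sum_withNonzeroValues_multinomial_mul_prod {a : ℕ → ℝ} (ha0 : a 0 = 1) (m : ℕ) {i : ℕ}
    (lam : Nat.Partition i) :
    ∑ k ∈ withNonzeroValues m lam.parts, (Nat.multinomial univ k : ℝ) * ∏ j, a (k j) =
      m.descFactorial lam.parts.card * dcoef lam * (lam.parts.map a).prod := by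
  have hP : 0 ∉ lam.parts := fun h => (lam.parts_pos h).ne' rfl
  have hF : ((lam.parts.map Nat.factorial).prod : ℝ) ≠ 0 := by
    exact_mod_cast (Multiset.prod_pos fun p hp => by
      obtain ⟨q, -, rfl⟩ := Multiset.mem_map.1 hp; exact Nat.factorial_pos q).ne'
  have h_term : ∀ k ∈ withNonzeroValues m lam.parts,
      (Nat.multinomial univ k : ℝ) * ∏ j, a (k j) =
        i.factorial / (lam.parts.map Nat.factorial).prod * (lam.parts.map a).prod := by
    intro k hk
    have h := multinomial_mul_prod_factorial_of_mem_withNonzeroValues hk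
    rw [lam.parts_sum] at h
    rw [← prod_map_nonzeroValues k ha0, mem_withNonzeroValues.1 hk]
    congr 1
    rw [eq_div_iff hF]
    exact_mod_cast h
  have h_dcoef : dcoef lam = i.factorial /
      ((lam.parts.map Nat.factorial).prod * multiplicityFactorial lam.parts : ℕ) := by
    simp [dcoef, multiplicityFactorial, Nat.cast_multiset_prod, Multiset.map_map]
  have h_mf : (multiplicityFactorial lam.parts : ℝ) ≠ 0 := by
    exact_mod_cast (prod_pos fun u _ => Nat.factorial_pos _).ne'
  rw [sum_congr rfl h_term, sum_const, nsmul_eq_mul, h_dcoef,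
    ← card_withNonzeroValues_mul_multiplicityFactorial m hP]
  push_cast
  field_simp

theorem sum_piAntidiag_multinomial_mul_prod {a : ℕ → ℝ} (ha0 : a 0 = 1) (m i : ℕ) :
    ∑ k ∈ piAntidiag (univ : Finset (Fin m)) i, (Nat.multinomial univ k : ℝ) * ∏ j, a (k j) =
      ∑ lam : Nat.Partition i,
        (m.descFactorial lam.parts.card : ℝ) * dcoef lam * (lam.parts.map a).prod := by
  classical
  have h_parts : ∀ k ∈ piAntidiag (univ : Finset (Fin m)) i,
      nonzeroValues k ∈ univ.image Nat.Partition.parts := fun k hk =>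
    mem_image.2 ⟨Nat.Partition.ofSums i (univ.val.map k)
      ((sum_eq_multiset_sum _ _).symm.trans (mem_piAntidiag.1 hk).1), mem_univ _, rfl⟩
  rw [← sum_fiberwise_of_maps_to h_parts, sum_image fun _ _ _ _ h => Nat.Partition.ext h]
  refine sum_congr rfl fun lam _ => ?_
  rw [← sum_withNonzeroValues_multinomial_mul_prod ha0, withNonzeroValues, lam.parts_sum]

lemma ProbabilityTheory.iIndepFun.integrable_fun_finset_prod {Ω ι 𝕜 : Type*}
    {mΩ : MeasurableSpace Ω} {μ : Measure Ω} [RCLike 𝕜] {f : ι → Ω → 𝕜} (hf : iIndepFun f μ)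
    (hmeas : ∀ j, Measurable (f j)) (hint : ∀ j, Integrable (f j) μ) (s : Finset ι) :
    Integrable (fun ω => ∏ j ∈ s, f j ω) μ := by
  classical
  have := hf.isProbabilityMeasure
  suffices Integrable (∏ j ∈ s, f j) μ by rwa [← prod_fn]
  induction s using Finset.induction_on with
  | empty => exact integrable_const 1
  | insert a s ha ih =>
    rw [prod_insert ha]
    exact (hf.indepFun_finsetProd_of_notMem hmeas ha).symm.integrable_mul (hint a) ih

lemma integrable_pow_of_integrable_abs_pow {Ω : Type*} {mΩ : MeasurableSpace Ω}
    {μ : Measure Ω} [IsFiniteMeasure μ] {f : Ω → ℝ} (hf : AEStronglyMeasurable f μ) {k i : ℕ}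
    (hki : k ≤ i) (hint : Integrable (fun ω => |f ω| ^ i) μ) :
    Integrable (fun ω => f ω ^ k) μ := by
  refine (integrable_norm_iff (hf.pow k)).1 ?_
  simpa only [Pi.pow_apply, norm_pow, Real.norm_eq_abs] using
    integrable_norm_pow_of_le hf hki (by simpa only [Real.norm_eq_abs] using hint)

theorem integral_sum_pow_eq_sum_piAntidiag {Ω ι : Type*} [Fintype ι] [DecidableEq ι]
    {mΩ : MeasurableSpace Ω} {μ : Measure Ω} {X : ι → Ω → ℝ} (hindep : iIndepFun X μ)
    (hmeas : ∀ j, Measurable (X j)) {i : ℕ} {a : ℕ → ℝ}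
    (hint : ∀ j, ∀ k ≤ i, Integrable (fun ω => X j ω ^ k) μ)
    (hmom : ∀ j, ∀ k ≤ i, ∫ ω, X j ω ^ k ∂μ = a k) :
    ∫ ω, (∑ j, X j ω) ^ i ∂μ =
      ∑ k ∈ piAntidiag (univ : Finset ι) i, (Nat.multinomial univ k : ℝ) * ∏ j, a (k j) := by
  have h_le : ∀ k ∈ piAntidiag (univ : Finset ι) i, ∀ j, k j ≤ i := fun k hk j =>
    (mem_piAntidiag.1 hk).1 ▸ single_le_sum (fun _ _ => Nat.zero_le _) (mem_univ j)
  have h_indep (k : ι → ℕ) : iIndepFun (fun j ω => X j ω ^ k j) μ :=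
    hindep.comp (fun j x => x ^ k j) fun j => measurable_id.pow_const _
  simp_rw [sum_pow_eq_sum_piAntidiag]
  rw [integral_finsetSum]
  · refine sum_congr rfl fun k hk => ?_
    rw [integral_const_mul, (h_indep k).integral_fun_prod_eq_prod_integral
      fun j => ((hmeas j).pow_const _).aestronglyMeasurable]
    exact congrArg _ (prod_congr rfl fun j _ => hmom j (k j) (h_le k hk j))
  · intro k hk
    exact ((h_indep k).integrable_fun_finset_prod (fun j => (hmeas j).pow_const _)
      (fun j => hint j (k j) (h_le k hk j)) univ).const_mul _

theorem moment_sum_iid_general {Ω : Type*} {mΩ : MeasurableSpace Ω} (μ : Measure Ω)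
    [IsProbabilityMeasure μ] (m : ℕ) (hm : 0 < m)
    (X : Fin m → Ω → ℝ) (hmeas : ∀ j, Measurable (X j))
    (hindep : iIndepFun X μ)
    (hident : ∀ j, IdentDistrib (X j) (X ⟨0, hm⟩) μ μ)
    (i : ℕ)
    (hint : Integrable (fun ω => |X ⟨0, hm⟩ ω| ^ i) μ)
    (a : ℕ → ℝ) (ha : ∀ k ≤ i, a k = ∫ ω, (X ⟨0, hm⟩ ω) ^ k ∂μ) :
    ∫ ω, (∑ j, X j ω) ^ i ∂μ =
      ∑ lam : Nat.Partition i,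
        (m.descFactorial lam.parts.card : ℝ) * dcoef lam * (lam.parts.map a).prod := by
  have h_pow (j : Fin m) (k : ℕ) :
      IdentDistrib (fun ω => X j ω ^ k) (fun ω => X ⟨0, hm⟩ ω ^ k) μ μ :=
    (hident j).comp (measurable_id.pow_const k)
  have ha0 : a 0 = 1 := by simp [ha 0 (Nat.zero_le i)]
  rw [integral_sum_pow_eq_sum_piAntidiag hindep hmeas
      (fun j k hk => (h_pow j k).integrable_iff.2
        (integrable_pow_of_integrable_abs_pow (hmeas _).aestronglyMeasurable hk hint))
      (fun j k hk => (h_pow j k).integral_eq.trans (ha k hk).symm),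
    sum_piAntidiag_multinomial_mul_prod ha0]

/-- Moments of a sum of `m` i.i.d. random variables:
`E[(X_1 + ⋯ + X_m)^i] = ∑_{λ ⊢ i} (m)_{ν_λ} d_λ a_λ`. -/
theorem moment_sum_iid {Ω : Type*} {mΩ : MeasurableSpace Ω} (μ : Measure Ω)
    [IsProbabilityMeasure μ] (m : ℕ) (hm : 0 < m)
    (X : Fin m → Ω → ℝ) (hmeas : ∀ j, Measurable (X j))
    (hindep : iIndepFun X μ)
    (hident : ∀ j, IdentDistrib (X j) (X ⟨0, hm⟩) μ μ)
    (i : ℕ) (hi : 1 ≤ i)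
    (hint : Integrable (fun ω => |X ⟨0, hm⟩ ω| ^ i) μ)
    (a : ℕ → ℝ) (ha : ∀ k ≤ i, a k = ∫ ω, (X ⟨0, hm⟩ ω) ^ k ∂μ) :
    ∫ ω, (∑ j, X j ω) ^ i ∂μ =
      ∑ lam : Nat.Partition i,
        (m.descFactorial lam.parts.card : ℝ) * dcoef lam * (lam.parts.map a).prod :=
  moment_sum_iid_general (mΩ := mΩ) μ m hm X hmeas hindep hident i hint a ha
end

section
/- Let a : ℕ → ℝ be a sequence with a_0 = 1. For each positive integer i define the i-th factorial moment a_{(i)} = ∑_{k=0}^{i} s(i,k) a_k, where the signed Stirling numbers of the first kind s(i,k) are the coefficients of the falling-factorial polynomial, x(x−1)⋯(x−i+1) = ∑_{k=0}^{i} s(i,k) x^k. Then a_{(i)} = 1 for every i ≥ 1 if and only if a_i = 𝔅_i for every i ≥ 1, where 𝔅_i is the i-th Bell number, i.e. the number of set partitions of an i-element set. -/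
open Finset Polynomial

/-! Let `L` be the linear functional on polynomials sending `X ^ k` to the Bell number `B k`.
Removing the block that contains a fixed element gives the recurrence `B (n+1) = ∑ C(n,k) B k`,
which says precisely that `L (X * p) = L (p(X + 1))`. Since the falling factorial satisfies
`x (x-1) ⋯ (x-n) = x · ((x-1) ⋯ (x-n))`, induction gives `L (x (x-1) ⋯ (x-i+1)) = B 0 = 1`:
the Bell numbers have all factorial moments equal to `1`. Conversely the falling factorial of
order `i` is monic of degree `i`, so the factorial moments determine the sequence. -/

/-- The `i`-th Bell number: the number of partitions of an `i`-element set into nonempty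
blocks. -/
noncomputable def bellNumber (i : ℕ) : ℕ :=
  Fintype.card (Finpartition (Finset.univ : Finset (Fin i)))

namespace Finpartition

section GeneralizedBooleanAlgebra

variable {α : Type*} [GeneralizedBooleanAlgebra α] [DecidableEq α] {a b : α}

theorem parts_avoid_of_mem (P : Finpartition a) (hb : b ∈ P.parts) :
    (P.avoid b).parts = P.parts.erase b := by
  ext c
  rw [mem_avoid, mem_erase]
  constructor
  · rintro ⟨d, hd, hdb, rfl⟩
    have hne : d ≠ b := fun h => hdb h.le
    have hdisj : Disjoint d b := P.disjoint hd hb hne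
    rw [hdisj.sdiff_eq_left]
    exact ⟨hne, hd⟩
  · rintro ⟨hne, hc⟩
    have hdisj : Disjoint c b := P.disjoint hc hb hne
    exact ⟨c, hc, fun hle => P.ne_bot hc (hdisj.eq_bot_of_le hle), hdisj.sdiff_eq_left⟩

end GeneralizedBooleanAlgebra

variable {α : Type*} [DecidableEq α] {u : Finset α} {x : α}

noncomputable def equivSigmaPartAvoid (hx : x ∈ u) :
    Finpartition u ≃ Σ b : {b ∈ u.powerset | x ∈ b}, Finpartition (u \ b.1) where
  toFun P :=
    ⟨⟨P.part x, mem_filter.2 ⟨mem_powerset.2 (P.part_subset x), P.mem_part_self.2 hx⟩⟩,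
      P.avoid (P.part x)⟩
  invFun Q := Q.2.extend (ne_empty_of_mem (mem_filter.1 Q.1.2).2) sdiff_disjoint
    (sdiff_sup_cancel (mem_powerset.1 (mem_filter.1 Q.1.2).1))
  left_inv P := by
    have hmem : P.part x ∈ P.parts := P.part_mem.2 hx
    ext1
    rw [extend_parts, parts_avoid_of_mem P hmem, insert_erase hmem]
  right_inv := by
    rintro ⟨⟨b, hb⟩, Q⟩
    obtain ⟨hbu, hxb⟩ := mem_filter.1 hb
    set E := Q.extend (ne_empty_of_mem hxb) sdiff_disjoint (sdiff_sup_cancel (mem_powerset.1 hbu))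
    have hbE : b ∈ E.parts := by simp [E, extend_parts]
    have hbQ : b ∉ Q.parts := fun h =>
      ne_empty_of_mem hxb (disjoint_self.1 (sdiff_disjoint.mono_left (Q.le h)))
    have hpart : E.part x = b := E.part_eq_of_mem hbE hxb
    have havoid : E.avoid b = Q := by
      ext1
      rw [parts_avoid_of_mem E hbE, extend_parts, erase_insert hbQ]
    refine Sigma.ext (Subtype.ext hpart) ?_
    change HEq (E.avoid (E.part x)) Q
    rw [← havoid, hpart]

theorem card_eq_sum_card_sdiff_insert (hx : x ∈ u) :
    Fintype.card (Finpartition u) =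
      ∑ t ∈ (u.erase x).powerset, Fintype.card (Finpartition (u \ insert x t)) := by
  rw [Fintype.card_congr (equivSigmaPartAvoid hx), Fintype.card_sigma,
    sum_coe_sort _ fun b => Fintype.card (Finpartition (u \ b))]
  refine sum_nbij' (erase · x) (insert x) ?_ ?_ ?_ ?_ ?_
  · intro b hb
    exact mem_powerset.2 (erase_subset_erase x (mem_powerset.1 (mem_filter.1 hb).1))
  · intro t ht
    have hxtu : insert x t ⊆ u := insert_subset hx ((mem_powerset.1 ht).trans (erase_subset x u))
    exact mem_filter.2 ⟨mem_powerset.2 hxtu, mem_insert_self x t⟩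
  · exact fun b hb => insert_erase (mem_filter.1 hb).2
  · exact fun t ht => erase_insert fun hxt => notMem_erase x u (mem_powerset.1 ht hxt)
  · intro b hb
    rw [insert_erase (mem_filter.1 hb).2]

theorem card_eq_bell (u : Finset α) : Fintype.card (Finpartition u) = Nat.bell #u := by
  induction h : #u using Nat.strong_induction_on generalizing u with
  | _ n ih =>
  obtain rfl | ⟨x, hx⟩ := u.eq_empty_or_nonempty
  · subst h
    rw [card_empty, Nat.bell_zero]
    exact Fintype.card_unique (α := Finpartition (⊥ : Finset α))
  have hn : n = #(u.erase x) + 1 := by rw [← h, card_erase_add_one hx]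
  calc Fintype.card (Finpartition u)
      = ∑ t ∈ (u.erase x).powerset, Nat.bell (#(u.erase x) - #t) := by
        rw [card_eq_sum_card_sdiff_insert hx]
        refine sum_congr rfl fun t ht => ih _ (by omega) _ ?_
        have hxt : x ∉ t := fun hxt => notMem_erase x u (mem_powerset.1 ht hxt)
        rw [card_sdiff_of_subset (insert_subset hx ((mem_powerset.1 ht).trans (erase_subset x u))),
          card_insert_of_notMem hxt, ← card_erase_add_one hx]
        omega
    _ = Nat.bell n := by
        rw [sum_powerset_apply_card fun k => Nat.bell (#(u.erase x) - k), hn, Nat.bell_succ,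
          ← Nat.range_succ_eq_Iic]
        rfl

end Finpartition

theorem Nat.bell_succ_eq_sum_range (n : ℕ) :
    Nat.bell (n + 1) = ∑ k ∈ range (n + 1), n.choose k * Nat.bell k := by
  rw [Nat.bell_succ, ← Nat.range_succ_eq_Iic, ← sum_range_reflect]
  refine sum_congr rfl fun k hk => ?_
  have hkn : k ≤ n := Nat.lt_succ_iff.1 (mem_range.1 hk)
  rw [add_tsub_cancel_right, Nat.sub_sub_self hkn, Nat.choose_symm hkn]

namespace Polynomial

section Semiring

variable {R : Type*} [Semiring R] (m : ℕ → R)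

noncomputable def momentFunctional : R[X] →ₗ[R] R :=
  lsum fun k => LinearMap.mulRight R (m k)

theorem momentFunctional_eq_sum_range {p : R[X]} {n : ℕ} (hp : p.natDegree < n) :
    momentFunctional m p = ∑ k ∈ range n, p.coeff k * m k :=
  sum_over_range' p (fun k => zero_mul (m k)) n hp

theorem momentFunctional_monomial (k : ℕ) (c : R) : momentFunctional m (monomial k c) = c * m k :=
  sum_monomial_index c _ (zero_mul _)

theorem momentFunctional_X_add_one_pow (n : ℕ) :
    momentFunctional m ((X + 1) ^ n) = ∑ k ∈ range (n + 1), n.choose k * m k := by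
  have hdeg : ((X + 1 : R[X]) ^ n).natDegree < n + 1 := Nat.lt_succ_of_le <| by
    simpa using natDegree_pow_le_of_le n (natDegree_add_le_of_degree_le natDegree_X_le (by simp))
  simp only [momentFunctional_eq_sum_range m hdeg, coeff_X_add_one_pow]

variable {m}

theorem momentFunctional_X_mul (hm : ∀ n, m (n + 1) = ∑ k ∈ range (n + 1), n.choose k * m k)
    (p : R[X]) : momentFunctional m (X * p) = momentFunctional m (p.comp (X + 1)) := by
  induction p using Polynomial.induction_on' with
  | add p q hp hq => rw [mul_add, map_add, hp, hq, add_comp, map_add]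
  | monomial n c =>
    rw [X_mul_monomial, momentFunctional_monomial, monomial_comp, ← smul_eq_C_mul, map_smul,
      momentFunctional_X_add_one_pow, hm, smul_eq_mul]

end Semiring

section Ring

variable {R : Type*} [Ring R]

theorem natDegree_descPochhammer_le (n : ℕ) : (descPochhammer R n).natDegree ≤ n := by
  rw [← descPochhammer_map (Int.castRingHom R)]
  exact natDegree_map_le.trans (descPochhammer_natDegree ℤ n).le

theorem coeff_descPochhammer_self (n : ℕ) : (descPochhammer R n).coeff n = 1 := by
  have hℤ : (descPochhammer ℤ n).coeff n = 1 := by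
    simpa [descPochhammer_natDegree] using (monic_descPochhammer ℤ n).coeff_natDegree
  rw [← descPochhammer_map (Int.castRingHom R), coeff_map, hℤ, map_one]

end Ring

section CommRing

variable {R : Type*} [CommRing R]

theorem momentFunctional_descPochhammer (m : ℕ → R) (n : ℕ) :
    momentFunctional m (descPochhammer R n) =
      m n + ∑ k ∈ range n, (descPochhammer R n).coeff k * m k := by
  rw [momentFunctional_eq_sum_range m (Nat.lt_succ_of_le (natDegree_descPochhammer_le n)),
    sum_range_succ, coeff_descPochhammer_self, one_mul, add_comm]

theorem momentFunctional_descPochhammer_of_binomial_recurrence {m : ℕ → R}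
    (hm : ∀ n, m (n + 1) = ∑ k ∈ range (n + 1), n.choose k * m k) (n : ℕ) :
    momentFunctional m (descPochhammer R n) = m 0 := by
  induction n with
  | zero => simpa using momentFunctional_descPochhammer m 0
  | succ n ih =>
    rw [descPochhammer_succ_left, momentFunctional_X_mul hm, Polynomial.comp_assoc]
    simpa using ih

theorem eq_of_momentFunctional_descPochhammer_eq {m m' : ℕ → R}
    (h : ∀ n, momentFunctional m (descPochhammer R n) =
      momentFunctional m' (descPochhammer R n)) :
    m = m' := by
  funext n
  induction n using Nat.strong_induction_on with
  | _ n ih =>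
  have hn := h n
  rw [momentFunctional_descPochhammer, momentFunctional_descPochhammer,
    sum_congr rfl fun k hk => by rw [ih k (mem_range.1 hk)]] at hn
  exact add_right_cancel hn

end CommRing

end Polynomial

theorem bellNumber_eq_bell (i : ℕ) : bellNumber i = Nat.bell i := by
  rw [bellNumber, Finpartition.card_eq_bell, card_univ, Fintype.card_fin]

/-- All factorial moments `a_{(i)} = ∑_{k=0}^{i} s(i,k) a_k` of the sequence `(a_i)` are equal
to `1` (for `i ≥ 1`) if and only if `a_i` is the `i`-th Bell number for every `i ≥ 1`.
Here `s(i,k)` are the signed Stirling numbers of the first kind, i.e. the coefficients of the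
falling-factorial polynomial `x(x−1)⋯(x−i+1)`. -/
theorem factorial_moments_all_one_iff_bell (a : ℕ → ℝ) (ha0 : a 0 = 1)
    (afact : ℕ → ℝ)
    (hafact : ∀ i, 1 ≤ i →
      afact i = ∑ k ∈ Finset.range (i + 1), (descPochhammer ℝ i).coeff k * a k) :
    (∀ i, 1 ≤ i → afact i = 1) ↔ (∀ i, 1 ≤ i → a i = (bellNumber i : ℝ)) := by
  set bell : ℕ → ℝ := fun k => (Nat.bell k : ℝ)
  have hrec : ∀ n, bell (n + 1) = ∑ k ∈ range (n + 1), n.choose k * bell k := fun n => by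
    simp only [bell, Nat.bell_succ_eq_sum_range, Nat.cast_sum, Nat.cast_mul]
  have hbell : ∀ n, momentFunctional bell (descPochhammer ℝ n) = 1 := fun n => by
    simp [momentFunctional_descPochhammer_of_binomial_recurrence hrec, bell]
  have hafact' (i : ℕ) (hi : 1 ≤ i) : afact i = momentFunctional a (descPochhammer ℝ i) := by
    rw [hafact i hi,
      momentFunctional_eq_sum_range a (Nat.lt_succ_of_le (natDegree_descPochhammer_le i))]
  simp only [bellNumber_eq_bell]
  constructor
  · intro h i _
    suffices a = bell from congrFun this i
    refine eq_of_momentFunctional_descPochhammer_eq fun n => ?_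
    rw [hbell]
    rcases Nat.eq_zero_or_pos n with rfl | hn
    · simpa [ha0] using momentFunctional_descPochhammer a 0
    · rw [← hafact' n hn, h n hn]
  · intro h i hi
    have ha : a = bell := funext fun k => by
      rcases Nat.eq_zero_or_pos k with rfl | hk
      · simp [bell, ha0]
      · exact h k hk
    rw [hafact' i hi, ha, hbell]
end

section
/- Let a : ℕ → ℝ be a sequence with a_0 = 1, and define the complete Bell (partition) polynomials of a by 𝒴_0 = 1 and 𝒴_i = ∑_{λ ⊢ i} d_λ a_λ for i ≥ 1. Then for every i ≥ 1 the recurrence 𝒴_i = ∑_{k=0}^{i−1} binom(i−1,k) a_{k+1} 𝒴_{i−1−k} holds. -/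
open Finset

/-!
The coefficient `d_λ` is Mathlib's `Multiset.bell λ`, and Mathlib proves
`d_λ = ∑_{m ∈ λ} binom(i-1, m-1) d_{λ ∖ m}` for `λ ⊢ i` (double counting `i d_λ = ∑_m m r_m d_λ`).
Since `a_λ = a_m a_{λ ∖ m}`, the same identity holds for the weighted terms `d_λ a_λ`. Summing over
`λ ⊢ i` and exchanging the two sums, removing one part `m` is a bijection from the partitions of
`i` having a part `m` onto the partitions of `i - m`, which gives the recurrence.
-/

namespace Nat.Partition

theorem sum_sum_erase_parts {M : Type*} [AddCommMonoid M] (n : ℕ) (F : ℕ → Multiset ℕ → M) :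
    ∑ p : n.Partition, ∑ m ∈ p.parts.toFinset, F m (p.parts.erase m)
      = ∑ m ∈ Icc 1 n, ∑ q : (n - m).Partition, F m q.parts := by
  rw [Finset.sum_comm' (t' := Icc 1 n) (s' := fun m => {p | m ∈ p.parts})]
  · refine sum_congr rfl fun m hm => ?_
    obtain ⟨hm1, hmn⟩ := mem_Icc.mp hm
    rw [sum_subtype (p := fun p : n.Partition => m ∈ p.parts) _ (fun p => by simp)]
    exact Fintype.sum_equiv (partitionWithPartEquiv hm1 hmn) _ _ (fun p => by simp)
  · intro p m
    simp only [mem_univ, Multiset.mem_toFinset, true_and, mem_filter, mem_Icc]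
    grind

end Nat.Partition

theorem dcoef_eq_bell {i : ℕ} (lam : Nat.Partition i) : dcoef lam = lam.parts.bell := by
  have hzero : lam.parts.toFinset.erase 0 = lam.parts.toFinset :=
    erase_eq_of_notMem fun h => (lam.parts_pos (Multiset.mem_toFinset.mp h)).false
  have h := lam.parts.bell_mul_eq
  rw [hzero, lam.parts_sum] at h
  have hden : (lam.parts.map fun p => (p.factorial : ℝ)).prod *
      ∏ j ∈ lam.parts.toFinset, ((lam.parts.count j).factorial : ℝ)
        = ((lam.parts.map Nat.factorial).prod *
            ∏ j ∈ lam.parts.toFinset, (lam.parts.count j).factorial : ℕ) := by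
    push_cast [Nat.cast_multiset_prod, Multiset.map_map]
    rfl
  rw [dcoef, hden, ← h, mul_assoc, Nat.cast_mul, mul_div_cancel_right₀]
  simp [Multiset.prod_eq_zero_iff, prod_eq_zero_iff, Nat.factorial_ne_zero]

section CompleteBell

variable {R : Type*} [CommSemiring R] (a : ℕ → R)

theorem Nat.Partition.bell_mul_prod_eq_sum_erase {n : ℕ} (p : (n + 1).Partition) :
    p.parts.bell * (p.parts.map a).prod
      = ∑ m ∈ p.parts.toFinset,
          n.choose (m - 1) * a m * ((p.parts.erase m).bell * ((p.parts.erase m).map a).prod) := by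
  rw [Nat.bell_eq_sum_erase p]
  push_cast
  rw [sum_mul]
  refine sum_congr rfl fun m hm => ?_
  rw [← Multiset.prod_map_erase (Multiset.mem_toFinset.mp hm)]
  ring

def completeBell (n : ℕ) : R :=
  ∑ p : n.Partition, p.parts.bell * (p.parts.map a).prod

theorem completeBell_zero : completeBell a 0 = 1 := by
  simp [completeBell]

theorem completeBell_succ (n : ℕ) :
    completeBell a (n + 1)
      = ∑ k ∈ range (n + 1), (n.choose k : R) * a (k + 1) * completeBell a (n - k) := by
  calc completeBell a (n + 1)
      = ∑ p : (n + 1).Partition, ∑ m ∈ p.parts.toFinset,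
          n.choose (m - 1) * a m * ((p.parts.erase m).bell * ((p.parts.erase m).map a).prod) :=
        sum_congr rfl fun p _ => p.bell_mul_prod_eq_sum_erase a
    _ = ∑ m ∈ Icc 1 (n + 1), ∑ q : (n + 1 - m).Partition,
          n.choose (m - 1) * a m * (q.parts.bell * (q.parts.map a).prod) :=
        Nat.Partition.sum_sum_erase_parts (n + 1) fun m s =>
          n.choose (m - 1) * a m * (s.bell * (s.map a).prod)
    _ = ∑ m ∈ Icc 1 (n + 1), n.choose (m - 1) * a m * completeBell a (n + 1 - m) := by
        simp only [completeBell, mul_sum]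
    _ = _ := by
        rw [← Finset.Ico_add_one_right_eq_Icc, sum_Ico_eq_sum_range]
        refine sum_congr rfl fun k _ => ?_
        rw [add_comm 1 k, Nat.add_sub_cancel, Nat.add_sub_add_right]

end CompleteBell

theorem completeBell_recurrence_general (a : ℕ → ℝ)
    (Y : ℕ → ℝ) (hY0 : Y 0 = 1)
    (hY : ∀ i, 1 ≤ i → Y i = ∑ lam : Nat.Partition i, dcoef lam * (lam.parts.map a).prod)
    (i : ℕ) (hi : 1 ≤ i) :
    Y i = ∑ k ∈ Finset.range i, ((i - 1).choose k : ℝ) * a (k + 1) * Y (i - 1 - k) := by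
  have hY_eq : Y = completeBell a := by
    funext n
    rcases Nat.eq_zero_or_pos n with rfl | hn
    · rw [hY0, completeBell_zero]
    · simp only [hY n hn, dcoef_eq_bell, completeBell]
  obtain ⟨n, rfl⟩ := Nat.exists_eq_add_of_le' hi
  simpa [hY_eq] using completeBell_succ a n

/-- The complete Bell polynomials `𝒴_i = ∑_{λ ⊢ i} d_λ a_λ` (with `𝒴_0 = 1`) satisfy the
recurrence `𝒴_i = ∑_{k=0}^{i−1} binom(i−1,k) a_{k+1} 𝒴_{i−1−k}` for `i ≥ 1`. -/
theorem completeBell_recurrence (a : ℕ → ℝ) (ha0 : a 0 = 1)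
    (Y : ℕ → ℝ) (hY0 : Y 0 = 1)
    (hY : ∀ i, 1 ≤ i → Y i = ∑ lam : Nat.Partition i, dcoef lam * (lam.parts.map a).prod)
    (i : ℕ) (hi : 1 ≤ i) :
    Y i = ∑ k ∈ Finset.range i, ((i - 1).choose k : ℝ) * a (k + 1) * Y (i - 1 - k) :=
  completeBell_recurrence_general a Y hY0 hY i hi
end

section
/- Let m ∈ ℝ and s > 0, and let X be a Gaussian random variable with mean m and variance s². Then for every nonnegative integer i, E[X^i] = ∑_{k=0}^{⌊i/2⌋} (s²/2)^k · ((i)_{2k}/k!) · m^{i−2k}, where (i)_{2k} = i(i−1)⋯(i−2k+1) is the falling factorial. -/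
/-!
The moment generating function of `gaussianReal m v` is `f t = exp (m t + v t² / 2)`, so the
moments are the derivatives `f⁽ⁿ⁾(0)`. Since `f' = (m + v t) f`, the Leibniz rule gives the
recurrence `f⁽ⁿ⁺²⁾(0) = m f⁽ⁿ⁺¹⁾(0) + (n + 1) v f⁽ⁿ⁾(0)`, and the closed-form sum satisfies the
same recurrence with the same two initial values.
-/

open MeasureTheory ProbabilityTheory Finset

section MomentSum

variable {K : Type*} [Field K]

def gaussianMomentTerm (m v : K) (n k : ℕ) : K :=
  (v / 2) ^ k * ((n.descFactorial (2 * k) : K) / (k.factorial : K)) * m ^ (n - 2 * k)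

def gaussianMomentSum (m v : K) (n : ℕ) : K :=
  ∑ k ∈ range (n / 2 + 1), gaussianMomentTerm m v n k

lemma gaussianMomentTerm_eq_zero_of_lt (m v : K) {n k : ℕ} (h : n < 2 * k) :
    gaussianMomentTerm m v n k = 0 := by
  simp [gaussianMomentTerm, Nat.descFactorial_eq_zero_iff_lt.mpr h]

@[simp]
lemma gaussianMomentTerm_zero_right (m v : K) (n : ℕ) : gaussianMomentTerm m v n 0 = m ^ n := by
  simp [gaussianMomentTerm]

lemma gaussianMomentSum_eq_sum_range (m v : K) {n N : ℕ} (hN : n / 2 + 1 ≤ N) :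
    gaussianMomentSum m v n = ∑ k ∈ range N, gaussianMomentTerm m v n k :=
  sum_subset (range_subset_range.mpr hN) fun _ _ hk ↦
    gaussianMomentTerm_eq_zero_of_lt m v (by grind)

@[simp]
lemma gaussianMomentSum_zero (m v : K) : gaussianMomentSum m v 0 = 1 := by
  simp [gaussianMomentSum]

@[simp]
lemma gaussianMomentSum_one (m v : K) : gaussianMomentSum m v 1 = m := by
  simp [gaussianMomentSum]

variable [CharZero K]

lemma gaussianMomentTerm_add_two (m v : K) (n k : ℕ) :
    gaussianMomentTerm m v (n + 2) (k + 1)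
      = m * gaussianMomentTerm m v (n + 1) (k + 1) + (n + 1) * v * gaussianMomentTerm m v n k := by
  rcases lt_or_ge n (2 * k) with hn | hn
  · simp [gaussianMomentTerm_eq_zero_of_lt m v hn,
      gaussianMomentTerm_eq_zero_of_lt m v (by omega : n + 1 < 2 * (k + 1)),
      gaussianMomentTerm_eq_zero_of_lt m v (by omega : n + 2 < 2 * (k + 1))]
  obtain ⟨r, rfl⟩ := Nat.exists_eq_add_of_le hn
  unfold gaussianMomentTerm
  set D := (2 * k + r).descFactorial (2 * k)
  have hD₂ :
      (2 * k + r + 2).descFactorial (2 * (k + 1)) = (2 * k + r + 2) * ((2 * k + r + 1) * D) := by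
    rw [show 2 * (k + 1) = 2 * k + 1 + 1 by ring, Nat.succ_descFactorial_succ,
      Nat.succ_descFactorial_succ]
  have hD₁ : (2 * k + r + 1).descFactorial (2 * (k + 1)) = (2 * k + r + 1) * (r * D) := by
    rw [show 2 * (k + 1) = 2 * k + 1 + 1 by ring, Nat.succ_descFactorial_succ,
      Nat.descFactorial_succ, Nat.add_sub_cancel_left]
  -- `m ^ (r - 1)` is a junk value when `r = 0`, but there it is multiplied by `r`.
  have hm : (r : K) * (m * m ^ (r - 1)) = r * m ^ r := by
    cases r <;> simp [pow_succ, mul_comm]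
  rw [hD₂, hD₁, show 2 * k + r + 2 - 2 * (k + 1) = r by omega,
    show 2 * k + r + 1 - 2 * (k + 1) = r - 1 by omega, Nat.add_sub_cancel_left, Nat.factorial_succ]
  push_cast
  field_simp
  linear_combination -(2 * k + r + 1) * (D : K) * (v / 2) ^ (k + 1) / (k.factorial : K) * hm

lemma gaussianMomentSum_add_two (m v : K) (n : ℕ) :
    gaussianMomentSum m v (n + 2)
      = m * gaussianMomentSum m v (n + 1) + (n + 1) * v * gaussianMomentSum m v n := by
  rw [gaussianMomentSum_eq_sum_range m v (N := n / 2 + 2) (by omega),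
    gaussianMomentSum_eq_sum_range m v (n := n + 1) (N := n / 2 + 2) (by omega),
    gaussianMomentSum, sum_range_succ' _ (n / 2 + 1), sum_range_succ' _ (n / 2 + 1), mul_add,
    mul_sum, mul_sum]
  simp only [gaussianMomentTerm_add_two, sum_add_distrib, gaussianMomentTerm_zero_right]
  ring

end MomentSum

theorem iteratedDeriv_add_two_of_deriv_eq_affine_mul {𝕜 : Type*} [NontriviallyNormedField 𝕜]
    (n : ℕ) {f : 𝕜 → 𝕜} (hf : ContDiff 𝕜 (n + 1) f) {a b : 𝕜}
    (hderiv : deriv f = fun t ↦ (a + b * t) * f t) (x : 𝕜) :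
    iteratedDeriv (n + 2) f x
      = (a + b * x) * iteratedDeriv (n + 1) f x + (n + 1) * b * iteratedDeriv n f x := by
  have hg₂ (j : ℕ) : iteratedDeriv (j + 2) (fun t ↦ a + b * t) x = 0 := by
    simp [iteratedDeriv_succ', iteratedDeriv_const]
  rw [iteratedDeriv_succ', hderiv, iteratedDeriv_fun_mul (by fun_prop) hf.contDiffAt,
    sum_range_succ', sum_range_succ']
  simp only [hg₂, iteratedDeriv_succ', iteratedDeriv_zero, mul_zero, zero_mul, sum_const_zero,
    zero_add, Nat.choose_zero_right, Nat.choose_one_right, Nat.cast_add, Nat.cast_one, one_mul,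
    Nat.reduceSubDiff, add_tsub_cancel_right, tsub_zero, deriv_const_add', deriv_const_mul_id']
  ring

theorem iteratedDeriv_exp_quadratic_zero (m v : ℝ) (n : ℕ) :
    iteratedDeriv n (fun t ↦ Real.exp (m * t + v * t ^ 2 / 2)) 0 = gaussianMomentSum m v n := by
  set f := fun t ↦ Real.exp (m * t + v * t ^ 2 / 2)
  have hderiv : deriv f = fun t ↦ (m + v * t) * f t := by
    ext t
    have hq : HasDerivAt (fun t ↦ m * t + v * t ^ 2 / 2) (m + v * t) t :=
      (((hasDerivAt_id' t).const_mul m).fun_add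
        (((hasDerivAt_pow 2 t).const_mul v).div_const 2)).congr_deriv (by ring)
    rw [hq.exp.deriv, mul_comm]
  induction n using Nat.twoStepInduction with
  | zero => simp [f]
  | one => simp [hderiv, f]
  | more n ih₀ ih₁ =>
    rw [iteratedDeriv_add_two_of_deriv_eq_affine_mul n (by fun_prop) hderiv, ih₀, ih₁,
      gaussianMomentSum_add_two]
    simp

theorem integral_pow_gaussianReal (m : ℝ) (v : NNReal) (n : ℕ) :
    ∫ x, x ^ n ∂gaussianReal m v = gaussianMomentSum m (v : ℝ) n := by
  rw [← iteratedDeriv_exp_quadratic_zero, ← mgf_fun_id_gaussianReal,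
    iteratedDeriv_mgf_zero (by simp)]
  rfl

theorem gaussian_moments_general (m s : ℝ) (i : ℕ) :
    ∫ x : ℝ, x ^ i ∂(gaussianReal m ⟨s ^ 2, sq_nonneg s⟩)
      = ∑ k ∈ Finset.range (i / 2 + 1),
          (s ^ 2 / 2) ^ k * ((i.descFactorial (2 * k) : ℝ) / (k.factorial : ℝ)) * m ^ (i - 2 * k) :=
  integral_pow_gaussianReal m _ i

/-- Moments of a Gaussian random variable with mean `m` and variance `s²`:
`E[X^i] = ∑_{k=0}^{⌊i/2⌋} (s²/2)^k ((i)_{2k}/k!) m^{i−2k}`. -/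
theorem gaussian_moments (m s : ℝ) (hs : 0 < s) (i : ℕ) :
    ∫ x : ℝ, x ^ i ∂(gaussianReal m ⟨s ^ 2, sq_nonneg s⟩)
      = ∑ k ∈ Finset.range (i / 2 + 1),
          (s ^ 2 / 2) ^ k * ((i.descFactorial (2 * k) : ℝ) / (k.factorial : ℝ)) * m ^ (i - 2 * k) :=
  gaussian_moments_general m s i
end

section
/- (Abel parametrization of free cumulants.) Let m, r : ℕ → ℝ with m_0 = r_0 = 1, and suppose the ordinary formal power series M(z) = ∑_{i≥0} m_i z^i and R(z) = ∑_{i≥0} r_i z^i satisfy M(z) = R(zM(z)) in ℝ⟦z⟧ (substitution of the series zM(z), which has zero constant term, into R); i.e., the r_i are the free cumulants of the moment sequence (m_i). Then for every i ≥ 1: i! · r_i = ∑_{λ ⊢ i} (−i)_{ν_λ−1} d_λ m̄_λ and i! · m_i = ∑_{λ ⊢ i} (i)_{ν_λ−1} d_λ r̄_λ, where m̄_λ = ∏_{j≥1} (j!\, m_j)^{r_j(λ)} and r̄_λ = ∏_{j≥1} (j!\, r_j)^{r_j(λ)} with r_j(λ) the multiplicity of the part j in λ. -/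
open Finset PowerSeries Polynomial

/-- Composition `h(k(z))` of formal power series: the `n`-th coefficient is
`∑_m coeff_m(h) · coeff_n(k^m)` (only `m ≤ n` contribute when `k` has zero constant term). -/
noncomputable def psComp (h k : PowerSeries ℝ) : PowerSeries ℝ :=
  PowerSeries.mk fun n => ∑ m ∈ Finset.range (n + 1),
    (PowerSeries.coeff (R := ℝ) m h) * (PowerSeries.coeff (R := ℝ) n (k ^ m))

/-!
Put `W = z M(z)`. The relation `M = R(W)` says `z = W / R(W)`, and Lagrange inversion in residue
form, `[z^N] F(W) W' M^{-(N+1)} = [z^N] F`, gives `(i+1) m_i = [z^i] R^{i+1}` (take `F = R^{i+1}`)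
and `(i-1) r_i = -[z^i] M^{-(i-1)}` (take `F = R`).

For `A = 1 + a_1 z + a_2 z^2 + ⋯`, the coefficient `[z^n] A^x` equals
`∑_{λ ⊢ n} (x)_{ν_λ} ∏_j a_{λ_j} / ∏_j r_j(λ)!`: for natural `x` by induction on `x`, removing one
part from `λ`; for negative integers `x` because both sides of `A^x A^y = A^{x+y}` are polynomial
in `y`. Evaluating at `x = i + 1` and `x = -(i - 1)` and using `(x)_{k+1} = x (x-1)_k` gives the
two formulas.
-/
open scoped Nat

theorem Nat.Partition.sum_sum_toFinset_erase {β : Type*} [AddCommMonoid β] (n : ℕ)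
    (f : ℕ → Multiset ℕ → β) :
    ∑ lam : n.Partition, ∑ j ∈ lam.parts.toFinset, f j (lam.parts.erase j) =
      ∑ j ∈ Icc 1 n, ∑ mu : (n - j).Partition, f j mu.parts := by
  rw [Finset.sum_comm' (t' := Icc 1 n) (s' := fun j => univ.filter (j ∈ ·.parts))]
  · refine sum_congr rfl fun j hj => ?_
    obtain ⟨hj1, hjn⟩ := Finset.mem_Icc.1 hj
    rw [Finset.sum_subtype (p := fun lam : n.Partition => j ∈ lam.parts) _ (by simp)]
    exact Fintype.sum_equiv (Nat.Partition.partitionWithPartEquiv hj1 hjn) _ _ fun p => by simp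
  · intro lam j
    simp only [mem_univ, Multiset.mem_toFinset, true_and, mem_filter, mem_Icc]
    exact ⟨fun h => ⟨h, lam.parts_pos h, lam.le_of_mem_parts h⟩, fun h => h.1⟩

theorem Nat.Partition.card_parts_ne_zero {n : ℕ} (hn : n ≠ 0) (lam : n.Partition) :
    lam.parts.card ≠ 0 := fun h => hn <| by
  simpa [Multiset.card_eq_zero.1 h, eq_comm] using lam.parts_sum

theorem Multiset.prod_factorial_count_cons {α : Type*} [DecidableEq α] (j : α)
    (t : Multiset α) :
    ∏ x ∈ (j ::ₘ t).toFinset, ((j ::ₘ t).count x)! =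
      (t.count j + 1) * ∏ x ∈ t.toFinset, (t.count x)! := by
  have hj : j ∈ (j ::ₘ t).toFinset := by simp
  have hsub : ∏ x ∈ t.toFinset, (t.count x)! = ∏ x ∈ (j ::ₘ t).toFinset, (t.count x)! :=
    prod_subset (Multiset.toFinset_subset.2 (Multiset.subset_cons t j))
      fun x _ hx => by rw [Multiset.count_eq_zero.2 (by simpa using hx), Nat.factorial_zero]
  rw [hsub, ← mul_prod_erase _ _ hj, ← mul_prod_erase _ _ hj, Multiset.count_cons_self,
    Nat.factorial_succ, mul_assoc]
  congr 2
  exact prod_congr rfl fun x hx => by rw [Multiset.count_cons_of_ne (ne_of_mem_erase hx)]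

section PartitionPolynomial

variable {K : Type*} [Field K]

noncomputable def partWeight (a : ℕ → K) (s : Multiset ℕ) : K :=
  (s.map a).prod / (∏ j ∈ s.toFinset, (s.count j)! : ℕ)

theorem count_mul_partWeight [CharZero K] (a : ℕ → K) {s : Multiset ℕ} {j : ℕ} (hj : j ∈ s) :
    (s.count j : K) * partWeight a s = a j * partWeight a (s.erase j) := by
  obtain ⟨t, rfl⟩ := Multiset.exists_cons_of_mem hj
  have ht : ((∏ x ∈ t.toFinset, (t.count x)! : ℕ) : K) ≠ 0 :=
    Nat.cast_ne_zero.2 (by positivity)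
  rw [Multiset.erase_cons_head, partWeight, partWeight, Multiset.prod_factorial_count_cons,
    Multiset.count_cons_self, Multiset.map_cons, Multiset.prod_cons]
  push_cast at ht ⊢
  field_simp

noncomputable def powCoeffPoly (a : ℕ → K) (n : ℕ) : K[X] :=
  ∑ lam : n.Partition, Polynomial.C (partWeight a lam.parts) * descPochhammer K lam.parts.card

theorem descPochhammer_eval_add_one {R : Type*} [CommRing R] (k : ℕ) (x : R) :
    (descPochhammer R k).eval (x + 1) =
      (descPochhammer R k).eval x + k * (descPochhammer R (k - 1)).eval x := by
  cases k with
  | zero => simp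
  | succ k =>
    have hleft : (descPochhammer R (k + 1)).eval (x + 1) = (x + 1) * (descPochhammer R k).eval x :=
      by simp [descPochhammer_succ_left, eval_comp]
    rw [hleft, descPochhammer_succ_eval, Nat.add_sub_cancel]
    push_cast
    ring

theorem powCoeffPoly_eval_add_one [CharZero K] {a : ℕ → K} (ha : a 0 = 1) (n : ℕ) (x : K) :
    (powCoeffPoly a n).eval (x + 1) =
      ∑ k ∈ range (n + 1), a k * (powCoeffPoly a (n - k)).eval x := by
  have hcount (lam : n.Partition) : partWeight a lam.parts *
      (lam.parts.card * (descPochhammer K (lam.parts.card - 1)).eval x) =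
        ∑ j ∈ lam.parts.toFinset, a j * partWeight a (lam.parts.erase j) *
          (descPochhammer K (lam.parts.erase j).card).eval x := by
    have hcard : (lam.parts.card : K) = ∑ j ∈ lam.parts.toFinset, (lam.parts.count j : K) := by
      exact_mod_cast (Multiset.toFinset_sum_count_eq lam.parts).symm
    rw [hcard, sum_mul, mul_sum]
    refine sum_congr rfl fun j hj => ?_
    have hj := Multiset.mem_toFinset.1 hj
    rw [← mul_assoc, mul_comm (partWeight a _), count_mul_partWeight a hj,
      Multiset.card_erase_of_mem hj, Nat.pred_eq_sub_one]
  simp only [powCoeffPoly, eval_finsetSum, eval_mul, eval_C, descPochhammer_eval_add_one,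
    mul_add, sum_add_distrib, hcount, mul_sum]
  rw [range_eq_Ico, sum_eq_sum_Ico_succ_bot n.add_one_pos, ha, Nat.sub_zero, zero_add,
    Finset.Ico_add_one_right_eq_Icc,
    Nat.Partition.sum_sum_toFinset_erase n fun j s =>
      a j * partWeight a s * (descPochhammer K s.card).eval x]
  simp only [one_mul, mul_assoc]

theorem powCoeffPoly_eval_zero (a : ℕ → K) (n : ℕ) :
    (powCoeffPoly a n).eval 0 = if n = 0 then 1 else 0 := by
  rcases n with _ | n
  · simp [powCoeffPoly, partWeight]
  · simp only [powCoeffPoly, eval_finsetSum, eval_mul, eval_C, n.add_one_ne_zero, if_false]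
    refine sum_eq_zero fun lam _ => ?_
    rw [descPochhammer_ne_zero_eval_zero _ (lam.card_parts_ne_zero n.add_one_ne_zero), mul_zero]

theorem coeff_mk_pow [CharZero K] {a : ℕ → K} (ha : a 0 = 1) (N n : ℕ) :
    coeff n (mk a ^ N) = (powCoeffPoly a n).eval (N : K) := by
  induction N generalizing n with
  | zero => simp [powCoeffPoly_eval_zero, PowerSeries.coeff_one]
  | succ N ih =>
    rw [pow_succ', PowerSeries.coeff_mul, Nat.sum_antidiagonal_eq_sum_range_succ_mk, Nat.cast_succ,
      powCoeffPoly_eval_add_one ha]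
    simp only [coeff_mk, ih]

theorem powCoeffPoly_eval_natCast_add [CharZero K] {a : ℕ → K} (ha : a 0 = 1) (N n : ℕ) (y : K) :
    (powCoeffPoly a n).eval (N + y) =
      ∑ k ∈ range (n + 1), (powCoeffPoly a k).eval (N : K) * (powCoeffPoly a (n - k)).eval y := by
  have key : (powCoeffPoly a n).comp (Polynomial.C (N : K) + Polynomial.X) =
      ∑ k ∈ range (n + 1),
        Polynomial.C ((powCoeffPoly a k).eval (N : K)) * powCoeffPoly a (n - k) := by
    refine Polynomial.eq_of_infinite_eval_eq _ _ <| Set.infinite_of_injective_forall_mem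
      (f := fun M : ℕ => (M : K)) Nat.cast_injective fun M => ?_
    simp only [Set.mem_ofPred_eq, eval_comp, eval_add, eval_C, eval_X, eval_finsetSum, eval_mul]
    rw [← Nat.cast_add, ← coeff_mk_pow ha, pow_add, PowerSeries.coeff_mul,
      Nat.sum_antidiagonal_eq_sum_range_succ_mk]
    simp only [coeff_mk_pow ha]
  simpa only [eval_comp, eval_add, eval_C, eval_X, eval_finsetSum, eval_mul] using
    congrArg (eval y) key

theorem coeff_inv_mk_pow [CharZero K] {a : ℕ → K} (ha : a 0 = 1) (N n : ℕ) :
    coeff n ((mk a)⁻¹ ^ N) = (powCoeffPoly a n).eval (-N : K) := by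
  have h0 : constantCoeff (mk a) ≠ 0 := by simp [ha]
  have hN : constantCoeff (mk a ^ N) ≠ 0 := by simp [ha]
  have hinv : (mk a)⁻¹ ^ N = (mk a ^ N)⁻¹ :=
    (eq_inv_iff_mul_eq_one hN).2 (by rw [← mul_pow, PowerSeries.inv_mul_cancel _ h0, one_pow])
  have hseries : mk (fun n => (powCoeffPoly a n).eval (-N : K)) * mk a ^ N = 1 := by
    ext n
    rw [mul_comm, PowerSeries.coeff_mul, Nat.sum_antidiagonal_eq_sum_range_succ_mk]
    simp only [coeff_mk_pow ha, coeff_mk, ← powCoeffPoly_eval_natCast_add ha, add_neg_cancel,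
      powCoeffPoly_eval_zero, PowerSeries.coeff_one]
  rw [hinv, ← (eq_inv_iff_mul_eq_one hN).2 hseries, coeff_mk]

noncomputable def abelSum (a : ℕ → K) (x : K) (n : ℕ) : K :=
  ∑ lam : n.Partition, (descPochhammer K (lam.parts.card - 1)).eval x * partWeight a lam.parts

theorem powCoeffPoly_eval_eq_mul_abelSum (a : ℕ → K) {n : ℕ} (hn : n ≠ 0) (x : K) :
    (powCoeffPoly a n).eval (x + 1) = (x + 1) * abelSum a x n := by
  simp only [powCoeffPoly, abelSum, eval_finsetSum, eval_mul, eval_C, mul_sum]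
  refine sum_congr rfl fun lam _ => ?_
  obtain ⟨k, hk⟩ := Nat.exists_eq_add_one_of_ne_zero (lam.card_parts_ne_zero hn)
  simp [hk, descPochhammer_succ_left, eval_comp]
  ring

theorem abelSum_one (a : ℕ → K) (x : K) : abelSum a x 1 = a 1 := by
  simp [abelSum, partWeight]

end PartitionPolynomial

section LagrangeInversion

variable {K : Type*} [Field K] {M : K⟦X⟧}

theorem PowerSeries.pow_mul_inv_pow_add (hM : constantCoeff M ≠ 0) (k l : ℕ) :
    M ^ k * M⁻¹ ^ (k + l) = M⁻¹ ^ l := by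
  rw [pow_add, ← mul_assoc, ← mul_pow, PowerSeries.mul_inv_cancel _ hM, one_pow, one_mul]

theorem PowerSeries.natCast_mul_coeff_derivative_mul_inv_pow (n e : ℕ) :
    (e : K) * coeff n (d⁄dX K M * M⁻¹ ^ (e + 1)) =
      -((n + 1) * coeff (n + 1) (M⁻¹ ^ e)) := by
  have hder : d⁄dX K (M⁻¹ ^ e) = -(e • (d⁄dX K M * M⁻¹ ^ (e + 1))) := by
    rcases e with _ | e
    · simp
    · rw [derivative_pow, derivative_inv', nsmul_eq_mul]
      push_cast
      ring
  have h := coeff_derivative (M⁻¹ ^ e) n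
  rw [hder, map_neg, map_nsmul, nsmul_eq_mul] at h
  linear_combination -h

theorem PowerSeries.pow_mul_derivative_X_mul_mul_inv_pow (hM : constantCoeff M ≠ 0) (a j : ℕ) :
    M ^ a * d⁄dX K (PowerSeries.X * M) * M⁻¹ ^ (a + j + 1) =
      M⁻¹ ^ j + PowerSeries.X * (d⁄dX K M * M⁻¹ ^ (j + 1)) := by
  rw [Derivation.leibniz, derivative_X, smul_eq_mul, smul_eq_mul]
  calc M ^ a * (PowerSeries.X * d⁄dX K M + M * 1) * M⁻¹ ^ (a + j + 1)
      = PowerSeries.X * d⁄dX K M * (M ^ a * M⁻¹ ^ (a + (j + 1))) +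
          M ^ (a + 1) * M⁻¹ ^ (a + 1 + j) := by ring
    _ = _ := by rw [pow_mul_inv_pow_add hM, pow_mul_inv_pow_add hM]; ring

theorem PowerSeries.coeff_X_mul_pow_mul_derivative_mul_inv_pow [CharZero K]
    (hM : constantCoeff M ≠ 0) {k N : ℕ} (hk : k ≤ N) :
    coeff N ((PowerSeries.X * M) ^ k * d⁄dX K (PowerSeries.X * M) * M⁻¹ ^ (N + 1)) =
      if k = N then 1 else 0 := by
  obtain ⟨j, rfl⟩ := Nat.exists_eq_add_of_le hk
  rw [mul_pow, mul_assoc, mul_assoc, ← mul_assoc (M ^ k), pow_mul_derivative_X_mul_mul_inv_pow hM,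
    add_comm k j, coeff_X_pow_mul]
  rcases j with _ | j
  · simp
  · rw [map_add, coeff_succ_X_mul, if_neg (by omega)]
    apply mul_left_cancel₀ (Nat.cast_add_one_ne_zero j : (j : K) + 1 ≠ 0)
    have h := natCast_mul_coeff_derivative_mul_inv_pow (M := M) j (j + 1)
    push_cast at h
    linear_combination h

end LagrangeInversion

theorem PowerSeries.coeff_X_mul_pow_of_lt {R : Type*} [CommSemiring R] (g : R⟦X⟧) {n k : ℕ}
    (h : n < k) : coeff n ((PowerSeries.X * g) ^ k) = 0 := by
  rw [mul_pow, coeff_X_pow_mul', if_neg (by omega)]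

theorem psComp_X_mul_eq_subst (F g : ℝ⟦X⟧) :
    psComp F (PowerSeries.X * g) = F.subst (PowerSeries.X * g) := by
  ext n
  rw [psComp, coeff_mk, coeff_subst' (HasSubst.of_constantCoeff_zero' (by simp)),
    finsum_eq_sum_of_support_subset (s := range (n + 1))]
  · simp only [smul_eq_mul]
  · intro d hd
    by_contra hdn
    exact hd (by simp [coeff_X_mul_pow_of_lt g (by simpa using hdn : n < d)])

theorem psComp_X_mul_pow (F g : ℝ⟦X⟧) (k : ℕ) :
    psComp (F ^ k) (PowerSeries.X * g) = psComp F (PowerSeries.X * g) ^ k := by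
  rw [psComp_X_mul_eq_subst, psComp_X_mul_eq_subst,
    subst_pow (HasSubst.of_constantCoeff_zero' (by simp))]

theorem coeff_psComp_X_mul_mul (F g B : ℝ⟦X⟧) (N : ℕ) :
    PowerSeries.coeff N (psComp F (PowerSeries.X * g) * B) =
      ∑ k ∈ range (N + 1),
        PowerSeries.coeff k F * PowerSeries.coeff N ((PowerSeries.X * g) ^ k * B) := by
  simp only [PowerSeries.coeff_mul, mul_sum]
  rw [sum_comm]
  refine sum_congr rfl fun p hp => ?_
  have hp : p.1 + p.2 = N := mem_antidiagonal.1 hp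
  rw [psComp, coeff_mk, sum_mul]
  simp only [mul_assoc]
  refine sum_subset (range_subset_range.2 (by omega)) fun k _ hk => ?_
  rw [coeff_X_mul_pow_of_lt g (by simpa using hk), zero_mul, mul_zero]

theorem coeff_psComp_mul_derivative_mul_inv_pow {M : ℝ⟦X⟧} (hM : constantCoeff M ≠ 0)
    (F : ℝ⟦X⟧) (N : ℕ) :
    PowerSeries.coeff N
        (psComp F (PowerSeries.X * M) * (d⁄dX ℝ (PowerSeries.X * M) * M⁻¹ ^ (N + 1))) =
      PowerSeries.coeff N F := by
  rw [coeff_psComp_X_mul_mul, sum_eq_single_of_mem N (self_mem_range_succ N)]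
  · rw [← mul_assoc, coeff_X_mul_pow_mul_derivative_mul_inv_pow hM le_rfl, if_pos rfl, mul_one]
  · intro k hk hkN
    rw [← mul_assoc, coeff_X_mul_pow_mul_derivative_mul_inv_pow hM (mem_range_succ_iff.1 hk),
      if_neg hkN, mul_zero]

section FreeCumulants

variable {m r : ℕ → ℝ} (hm0 : m 0 = 1)
  (hR : PowerSeries.mk m = psComp (PowerSeries.mk r) (PowerSeries.X * PowerSeries.mk m))
include hm0 hR

theorem coeff_cumulants_pow_succ (i : ℕ) :
    PowerSeries.coeff i (PowerSeries.mk r ^ (i + 1)) = (i + 1) * m i := by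
  have hM : constantCoeff (mk m) ≠ 0 := by simp [hm0]
  have h := coeff_psComp_mul_derivative_mul_inv_pow hM (mk r ^ (i + 1)) i
  have hcancel := pow_mul_inv_pow_add hM (i + 1) 0
  rw [add_zero, pow_zero] at hcancel
  rw [psComp_X_mul_pow, ← hR, mul_left_comm, hcancel, mul_one, PowerSeries.coeff_derivative,
    coeff_succ_X_mul, coeff_mk] at h
  rw [← h]
  ring

theorem natCast_mul_cumulant_succ (i : ℕ) :
    (i : ℝ) * r (i + 1) = -PowerSeries.coeff (i + 1) ((PowerSeries.mk m)⁻¹ ^ i) := by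
  have hM : constantCoeff (mk m) ≠ 0 := by simp [hm0]
  have h := coeff_psComp_mul_derivative_mul_inv_pow hM (mk r) (i + 1)
  have hsplit := pow_mul_derivative_X_mul_mul_inv_pow hM 1 i
  rw [pow_one, add_comm 1 i] at hsplit
  rw [← hR, ← mul_assoc, hsplit, map_add, coeff_succ_X_mul, coeff_mk] at h
  rw [← h]
  linear_combination natCast_mul_coeff_derivative_mul_inv_pow (M := mk m) i i

theorem cumulant_one : r 1 = m 1 := by
  simpa [psComp, sum_range_succ, hm0, eq_comm] using congrArg (PowerSeries.coeff 1) hR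

end FreeCumulants

theorem factorial_mul_abelSum (a : ℕ → ℝ) (x : ℝ) (n : ℕ) :
    (n ! : ℝ) * abelSum a x n = ∑ lam : n.Partition,
      (descPochhammer ℝ (lam.parts.card - 1)).eval x * dcoef lam *
        (lam.parts.map fun j => (j ! : ℝ) * a j).prod := by
  rw [abelSum, mul_sum]
  refine sum_congr rfl fun lam _ => ?_
  have hfac : (lam.parts.map fun p => (p ! : ℝ)).prod ≠ 0 :=
    Multiset.prod_ne_zero (by simp [Nat.factorial_ne_zero])
  have hcount : ∏ j ∈ lam.parts.toFinset, ((lam.parts.count j) ! : ℝ) ≠ 0 :=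
    prod_ne_zero_iff.2 fun _ _ => by positivity
  rw [dcoef, partWeight, Multiset.prod_map_mul]
  push_cast
  field_simp

/-- Abel parametrization of free cumulants: if `M(z) = R(zM(z))` (the R-transform relation
defining the free cumulants `r_i` of the moments `m_i`), then
`i! r_i = ∑_{λ ⊢ i} (−i)_{ν_λ−1} d_λ m̄_λ` and `i! m_i = ∑_{λ ⊢ i} (i)_{ν_λ−1} d_λ r̄_λ`,
where `m̄_λ = ∏_j (j! m_j)^{r_j(λ)}` and `r̄_λ = ∏_j (j! r_j)^{r_j(λ)}`. -/
theorem free_cumulants_abel_parametrization (m r : ℕ → ℝ) (hm0 : m 0 = 1) (hr0 : r 0 = 1)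
    (hR : PowerSeries.mk m = psComp (PowerSeries.mk r) (PowerSeries.X * PowerSeries.mk m))
    (i : ℕ) (hi : 1 ≤ i) :
    ((i.factorial : ℝ) * r i = ∑ lam : Nat.Partition i,
        (descPochhammer ℝ (lam.parts.card - 1)).eval (-(i : ℝ)) * dcoef lam *
          (lam.parts.map (fun j => (j.factorial : ℝ) * m j)).prod) ∧
    ((i.factorial : ℝ) * m i = ∑ lam : Nat.Partition i,
        (descPochhammer ℝ (lam.parts.card - 1)).eval ((i : ℝ)) * dcoef lam *
          (lam.parts.map (fun j => (j.factorial : ℝ) * r j)).prod) := by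
  obtain ⟨n, rfl⟩ := Nat.exists_eq_add_of_le' hi
  rw [← factorial_mul_abelSum, ← factorial_mul_abelSum]
  refine ⟨congrArg _ ?_, congrArg _ ?_⟩
  · rcases Nat.eq_zero_or_pos n with rfl | hn
    · rw [abelSum_one, cumulant_one hm0 hR]
    · apply mul_left_cancel₀ (Nat.cast_ne_zero.2 hn.ne' : (n : ℝ) ≠ 0)
      have := powCoeffPoly_eval_eq_mul_abelSum m n.add_one_ne_zero (-((n + 1 : ℕ) : ℝ))
      rw [natCast_mul_cumulant_succ hm0 hR, coeff_inv_mk_pow hm0]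
      push_cast at this ⊢
      rw [show -(n : ℝ) = -(n + 1) + 1 by ring, this]
      ring
  · apply mul_left_cancel₀ (Nat.cast_add_one_ne_zero (n + 1) : ((n + 1 : ℕ) : ℝ) + 1 ≠ 0)
    rw [← coeff_cumulants_pow_succ hm0 hR, coeff_mk_pow hr0, Nat.cast_succ (n + 1),
      powCoeffPoly_eval_eq_mul_abelSum r n.add_one_ne_zero]
end

section
/- (Abel parametrization of Boolean cumulants.) Let m, b : ℕ → ℝ with m_0 = 1 and b_0 = 0, and suppose the ordinary formal power series M(z) = ∑_{i≥0} m_i z^i and B(z) = ∑_{i≥1} b_i z^i satisfy M(z) − 1 = B(z)·M(z) in ℝ⟦z⟧; i.e., the b_i are the Boolean cumulants of the moment sequence (m_i). Then for every i ≥ 1: i! · b_i = ∑_{λ ⊢ i} (−1)^{ν_λ−1} ν_λ! d_λ m̄_λ, where m̄_λ = ∏_{j≥1} (j!\, m_j)^{r_j(λ)} with r_j(λ) the multiplicity of the part j in λ. -/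
/-!
As `m₀ = 1`, `M` is invertible and `M - 1 = B M` gives `B = 1 - M⁻¹`. The coefficients of `M⁻¹`
are `c_n = ∑_{λ ⊢ n} (-1)^{ν_λ} (ν_λ! / ∏_j r_j!) ∏_{p ∈ λ} m_p`: in `∑_{k ≥ 1} m_k c_{n-k}` a
pair `(k, μ ⊢ n - k)` is a partition `λ ⊢ n` with a marked part `k`, and Pascal's rule
`∑_k (ν - 1)! / ∏_j r_j(λ ∖ k)! = ν! / ∏_j r_j(λ)!` (arrangements of the parts classified by their
first entry) collapses the sum to `-c_n`. Finally `ν! d_λ ∏_{p ∈ λ} p! = i! ν! / ∏_j r_j!`.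
-/

open Finset PowerSeries

namespace Multiset

variable {α : Type*} [DecidableEq α]

theorem prod_factorial_count_mul_countPerms (s : Multiset α) :
    (∏ a ∈ s.toFinset, (s.count a).factorial) * s.countPerms = (card s).factorial := by
  rw [countPerms, Finsupp.multinomial_eq, toFinsupp_support, ← toFinset_sum_count_eq]
  exact Nat.multinomial_spec _ _

theorem card_mul_countPerms_erase {s : Multiset α} {a : α} (h : a ∈ s) :
    card s * (s.erase a).countPerms = s.count a * s.countPerms := by
  have hfilter : (s.erase a).filter (a ≠ ·) = s.filter (a ≠ ·) := by
    conv_rhs => rw [← cons_erase h]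
    rw [filter_cons_of_neg _ (by simp)]
  obtain ⟨n, hn⟩ := Nat.exists_eq_add_one_of_ne_zero (card_pos_iff_exists_mem.2 ⟨a, h⟩).ne'
  obtain ⟨c, hc⟩ := Nat.exists_eq_add_one_of_ne_zero (count_pos.2 h).ne'
  rw [countPerms_filter_ne a s, countPerms_filter_ne a (s.erase a), hfilter, count_erase_self,
    card_erase_of_mem h, hn, hc, Nat.pred_succ, Nat.add_sub_cancel, ← mul_assoc,
    Nat.add_one_mul_choose_eq]
  ring

theorem sum_countPerms_erase {s : Multiset α} (hs : s ≠ 0) :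
    ∑ a ∈ s.toFinset, (s.erase a).countPerms = s.countPerms := by
  refine Nat.eq_of_mul_eq_mul_left (card_pos.2 hs) ?_
  rw [mul_sum, sum_congr rfl fun a ha => card_mul_countPerms_erase (mem_toFinset.1 ha),
    ← sum_mul, toFinset_sum_count_eq]

end Multiset

namespace Nat.Partition

theorem parts_ne_zero {n : ℕ} (hn : n ≠ 0) (lam : Nat.Partition n) : lam.parts ≠ 0 := by
  intro h
  rw [← lam.parts_sum, h, Multiset.sum_zero] at hn
  exact hn rfl

theorem sum_Icc_sum_eq_sum_sum_erase {M : Type*} [AddCommMonoid M] (n : ℕ)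
    (F : ℕ → Multiset ℕ → M) :
    ∑ k ∈ Icc 1 n, ∑ μ : Nat.Partition (n - k), F k μ.parts =
      ∑ lam : Nat.Partition n, ∑ k ∈ lam.parts.toFinset, F k (lam.parts.erase k) := by
  have hinner : ∀ k ∈ Icc 1 n, ∑ μ : Nat.Partition (n - k), F k μ.parts =
      ∑ lam : Nat.Partition n with k ∈ lam.parts, F k (lam.parts.erase k) := by
    intro k hk
    obtain ⟨hk1, hkn⟩ := mem_Icc.1 hk
    rw [← (partitionWithPartEquiv hk1 hkn).sum_comp]
    simp only [partitionWithPartEquiv_apply_parts]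
    exact (sum_subtype _ (by simp) fun lam : Nat.Partition n => F k (lam.parts.erase k)).symm
  rw [sum_congr rfl hinner]
  refine sum_comm' fun k lam => ?_
  simp only [mem_Icc, mem_filter, mem_univ, true_and, Multiset.mem_toFinset]
  exact ⟨fun h => ⟨h.2, trivial⟩, fun h => ⟨⟨lam.parts_pos h.1, le_of_mem_parts h.1⟩, h.1⟩⟩

end Nat.Partition

section InverseSeries

variable {R : Type*} [CommRing R] (m : ℕ → R)

noncomputable def invWeight (s : Multiset ℕ) : R :=
  (-1) ^ Multiset.card s * s.countPerms * (s.map m).prod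

noncomputable def invCoeff (n : ℕ) : R :=
  ∑ lam : Nat.Partition n, invWeight m lam.parts

theorem sum_mul_invWeight_erase {s : Multiset ℕ} (hs : s ≠ 0) :
    ∑ k ∈ s.toFinset, m k * invWeight m (s.erase k) = -invWeight m s := by
  have hterm : ∀ k ∈ s.toFinset, m k * invWeight m (s.erase k) =
      -((-1) ^ Multiset.card s * (s.map m).prod) * (s.erase k).countPerms := by
    intro k hk
    have hk := Multiset.mem_toFinset.1 hk
    obtain ⟨ν, hν⟩ :=
      Nat.exists_eq_add_one_of_ne_zero (Multiset.card_pos_iff_exists_mem.2 ⟨k, hk⟩).ne'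
    rw [invWeight, Multiset.card_erase_of_mem hk, hν, Nat.pred_succ, ← Multiset.prod_map_erase hk]
    ring
  rw [sum_congr rfl hterm, ← mul_sum, ← Nat.cast_sum, Multiset.sum_countPerms_erase hs, invWeight]
  ring

theorem invCoeff_zero : invCoeff m 0 = 1 := by
  simp [invCoeff, invWeight]

theorem sum_Icc_mul_invCoeff {n : ℕ} (hn : n ≠ 0) :
    ∑ k ∈ Icc 1 n, m k * invCoeff m (n - k) = -invCoeff m n := by
  simp only [invCoeff, mul_sum]
  rw [Nat.Partition.sum_Icc_sum_eq_sum_sum_erase n fun k μ => m k * invWeight m μ,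
    ← sum_neg_distrib]
  exact sum_congr rfl fun lam _ => sum_mul_invWeight_erase m (lam.parts_ne_zero hn)

theorem mk_mul_mk_invCoeff (hm0 : m 0 = 1) : mk m * mk (invCoeff m) = 1 := by
  ext n
  rw [coeff_mul, Finset.Nat.sum_antidiagonal_eq_sum_range_succ_mk, coeff_one]
  rcases eq_or_ne n 0 with rfl | hn
  · simp [hm0, invCoeff_zero]
  · rw [range_eq_Ico, sum_eq_sum_Ico_succ_bot n.succ_pos, zero_add, Nat.succ_eq_add_one,
      Ico_add_one_right_eq_Icc]
    simp only [coeff_mk, hm0, Nat.sub_zero, one_mul, sum_Icc_mul_invCoeff m hn, if_neg hn]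
    ring

theorem eq_neg_invCoeff_of_mk_sub_one_eq_mul {b : ℕ → R} (hm0 : m 0 = 1)
    (hB : mk m - 1 = mk b * mk m) {n : ℕ} (hn : n ≠ 0) : b n = -invCoeff m n := by
  have hinv := mk_mul_mk_invCoeff m hm0
  have hb : mk b = 1 - mk (invCoeff m) :=
    calc mk b = mk b * mk m * mk (invCoeff m) := by rw [mul_assoc, hinv, mul_one]
      _ = 1 - mk (invCoeff m) := by rw [← hB, sub_mul, hinv, one_mul]
  simpa [coeff_one, hn] using congrArg (coeff n) hb

end InverseSeries

theorem card_factorial_mul_dcoef {i : ℕ} (lam : Nat.Partition i) :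
    (lam.parts.card.factorial : ℝ) * dcoef lam * (lam.parts.map fun p => (p.factorial : ℝ)).prod =
      i.factorial * lam.parts.countPerms := by
  have hP : (lam.parts.map fun p => (p.factorial : ℝ)).prod ≠ 0 :=
    Multiset.prod_ne_zero fun h => by
      obtain ⟨p, -, hp⟩ := Multiset.mem_map.1 h
      exact (Nat.cast_ne_zero.2 p.factorial_ne_zero) hp
  have hR : (∏ j ∈ lam.parts.toFinset, ((lam.parts.count j).factorial : ℝ)) ≠ 0 :=
    prod_ne_zero_iff.2 fun j _ => Nat.cast_ne_zero.2 (Nat.factorial_ne_zero _)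
  rw [dcoef, ← Multiset.prod_factorial_count_mul_countPerms]
  push_cast
  field_simp

theorem boolean_cumulants_abel_parametrization_general (m b : ℕ → ℝ) (hm0 : m 0 = 1)
    (hB : PowerSeries.mk m - 1 = PowerSeries.mk b * PowerSeries.mk m)
    (i : ℕ) (hi : 1 ≤ i) :
    (i.factorial : ℝ) * b i = ∑ lam : Nat.Partition i,
      (-1 : ℝ) ^ (lam.parts.card - 1) * (lam.parts.card.factorial : ℝ) * dcoef lam *
        (lam.parts.map (fun j => (j.factorial : ℝ) * m j)).prod := by
  rw [eq_neg_invCoeff_of_mk_sub_one_eq_mul m hm0 hB (by omega), invCoeff, mul_neg, mul_sum,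
    ← sum_neg_distrib]
  refine sum_congr rfl fun lam _ => ?_
  obtain ⟨ν, hν⟩ := Nat.exists_eq_add_one_of_ne_zero
    (Multiset.card_pos.2 (lam.parts_ne_zero (by omega))).ne'
  have hdcoef := card_factorial_mul_dcoef lam
  rw [hν] at hdcoef
  rw [Multiset.prod_map_mul, invWeight, hν, Nat.add_sub_cancel, pow_succ]
  linear_combination -(-1 : ℝ) ^ ν * (lam.parts.map m).prod * hdcoef

/-- Abel parametrization of Boolean cumulants: if `M(z) − 1 = B(z)·M(z)` (the relation
defining the Boolean cumulants `b_i` of the moments `m_i`), then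
`i! b_i = ∑_{λ ⊢ i} (−1)^{ν_λ−1} ν_λ! d_λ m̄_λ`, where `m̄_λ = ∏_j (j! m_j)^{r_j(λ)}`. -/
theorem boolean_cumulants_abel_parametrization (m b : ℕ → ℝ) (hm0 : m 0 = 1) (hb0 : b 0 = 0)
    (hB : PowerSeries.mk m - 1 = PowerSeries.mk b * PowerSeries.mk m)
    (i : ℕ) (hi : 1 ≤ i) :
    (i.factorial : ℝ) * b i = ∑ lam : Nat.Partition i,
      (-1 : ℝ) ^ (lam.parts.card - 1) * (lam.parts.card.factorial : ℝ) * dcoef lam *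
        (lam.parts.map (fun j => (j.factorial : ℝ) * m j)).prod :=
  boolean_cumulants_abel_parametrization_general m b hm0 hB i hi
end
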